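/- arXiv:2504.10966 — 2 statements merged into one kernel-verified Lean document; each statement's English description precedes it below -/
import Mathlib

section
/- The function u(x) = (−2 log|x|)^{1/2} satisfies −Δu = u^{−3}·e^{u²} pointwise on the punctured disc {x ∈ ℝ² : 0 < |x| < 1}. -/
open Set Real Filter Topology

/-!
The profile `φ r = √(-2 log r)` obeys `φ' = -1/(r φ)`, and differentiating this once more gives
`φ'' + φ'/r = -1/(r² φ³)`. Since `e^{φ²} = e^{-2 log r} = r⁻²`, this is `-φ⁻³ e^{φ²}`.
-/

lemma neg_two_mul_log_pos {x : ℝ} (hx : x ∈ Ioo (0 : ℝ) 1) : 0 < -2 * log x := by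
  linarith [log_neg hx.1 hx.2]

lemma exp_neg_two_mul_log {x : ℝ} (hx : x ≠ 0) : exp (-2 * log x) = (x ^ 2)⁻¹ := by
  rw [show -2 * log x = log ((x ^ 2)⁻¹) by rw [log_inv, log_pow]; push_cast; ring,
    exp_log (by positivity)]

lemma hasDerivAt_sqrt_neg_two_mul_log {x : ℝ} (hx : x ∈ Ioo (0 : ℝ) 1) :
    HasDerivAt (fun t => √(-2 * log t)) (-(x * √(-2 * log x))⁻¹) x := by
  have hlog : HasDerivAt (fun t => -2 * log t) (-2 * x⁻¹) x :=
    (hasDerivAt_log hx.1.ne').const_mul (-2)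
  convert hlog.sqrt (neg_two_mul_log_pos hx).ne' using 1
  field_simp

lemma deriv_sqrt_neg_two_mul_log_eventuallyEq {x : ℝ} (hx : x ∈ Ioo (0 : ℝ) 1) :
    deriv (fun t => √(-2 * log t)) =ᶠ[𝓝 x] fun t => -(t * √(-2 * log t))⁻¹ :=
  eventually_of_mem (isOpen_Ioo.mem_nhds hx) fun _ ht =>
    (hasDerivAt_sqrt_neg_two_mul_log ht).deriv

lemma hasDerivAt_neg_inv_mul_sqrt_neg_two_mul_log {x : ℝ} (hx : x ∈ Ioo (0 : ℝ) 1) :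
    HasDerivAt (fun t => -(t * √(-2 * log t))⁻¹)
      ((√(-2 * log x) - (√(-2 * log x))⁻¹) / (x * √(-2 * log x)) ^ 2) x := by
  have hsqrt := hasDerivAt_sqrt_neg_two_mul_log hx
  have hpos : 0 < √(-2 * log x) := sqrt_pos.mpr (neg_two_mul_log_pos hx)
  have hprod : x * √(-2 * log x) ≠ 0 := (mul_pos hx.1 hpos).ne'
  have h := ((hasDerivAt_id' x).fun_mul hsqrt).fun_inv hprod |>.fun_neg
  refine h.congr_deriv ?_
  have hx0 := hx.1.ne'
  field_simp
  ring

/-- The radial profile `φ r = (-2 log r)^(1/2)` of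
`u(x) = (-2 log |x|)^(1/2)` satisfies `-Δ u = u^(-3) e^(u²)` on the punctured
unit disc, with the radial Laplacian `Δ u = φ''(r) + φ'(r)/r`, `r = |x|`. -/
theorem stmt3 (φ : ℝ → ℝ)
    (hφ : ∀ r ∈ Ioo (0:ℝ) 1, φ r = (-2 * Real.log r) ^ (1/2 : ℝ)) :
    ∀ r ∈ Ioo (0:ℝ) 1,
      -(deriv (deriv φ) r + deriv φ r / r)
        = (φ r) ^ (-(3:ℝ)) * Real.exp ((φ r) ^ 2) := by
  intro r hr
  have hφ_eq : φ =ᶠ[𝓝 r] fun t => √(-2 * log t) :=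
    eventually_of_mem (isOpen_Ioo.mem_nhds hr) fun t ht => by simp only [hφ t ht, sqrt_eq_rpow]
  have hφr : φ r = √(-2 * log r) := hφ_eq.eq_of_nhds
  have hd1 : deriv φ r = -(r * √(-2 * log r))⁻¹ := by
    rw [hφ_eq.deriv_eq, (hasDerivAt_sqrt_neg_two_mul_log hr).deriv]
  have hd2 : deriv (deriv φ) r
      = (√(-2 * log r) - (√(-2 * log r))⁻¹) / (r * √(-2 * log r)) ^ 2 := by
    rw [(hφ_eq.deriv.trans (deriv_sqrt_neg_two_mul_log_eventuallyEq hr)).deriv_eq,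
      (hasDerivAt_neg_inv_mul_sqrt_neg_two_mul_log hr).deriv]
  have hexp : exp (φ r ^ 2) = (r ^ 2)⁻¹ := by
    rw [hφr, sq_sqrt (neg_two_mul_log_pos hr).le, exp_neg_two_mul_log hr.1.ne']
  have hpos : 0 < √(-2 * log r) := sqrt_pos.mpr (neg_two_mul_log_pos hr)
  rw [hd1, hd2, hexp, hφr, rpow_neg hpos.le, show (3 : ℝ) = (3 : ℕ) by norm_num, rpow_natCast]
  have hr0 := hr.1.ne'
  field_simp
  ring
end

section
/- Let f be C¹ on [0,∞) with f, f' > 0 on (0,∞), F(s) = ∫_s^∞ dτ/f(τ) < ∞, and let w : (0,T)×B_R → ℝ be a positive C^{1,2} solution of ∂_t w − Δw = w³/2 with w ≥ F(β)^{−1/2}, where β satisfies f'(s)F(s) ≤ 1 for all s ≥ β. Then ū := F⁻¹(w⁻²) satisfies ∂_t ū − Δū − f(ū) = 4 f(ū) w⁻⁴ |∇w|² (3/2 − f'(ū)F(ū)) ≥ 0 pointwise on (0,T)×B_R; in particular ū is a (classical) supersolution of ∂_t u = Δu + f(u). -/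
/-!
Write `ū = Φ ∘ w` with `Φ y = F⁻¹ (y⁻²)`. The chain rule gives
`(∂ₜ - Δ) ū = Φ'(w) (∂ₜ - Δ) w - Φ''(w) ‖∇w‖²`. Since `F' = -1/f`, the inverse satisfies
`(F⁻¹)' = -f ∘ F⁻¹`, so `Φ' y = 2 f(Φ y) / y³` and
`Φ'' y = 4 f'(Φ y) f(Φ y) / y⁶ - 6 f(Φ y) / y⁴`. The heat equation `(∂ₜ - Δ) w = w³/2` turns
the first term into exactly `f(ū)`, and `F(ū) = w⁻²` turns the second into the claimed right-hand
side. The lower bound on `w` keeps `w⁻²` in `(0, F β]`, i.e. `ū ≥ β`, where `f' F ≤ 1 < 3/2`.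
-/

open Set MeasureTheory Metric
open Topology

noncomputable def lap (f : EuclideanSpace ℝ (Fin 2) → ℝ) (x : EuclideanSpace ℝ (Fin 2)) : ℝ :=
  ∑ i : Fin 2,
    iteratedFDeriv ℝ 2 f x ![EuclideanSpace.single i 1, EuclideanSpace.single i 1]

section Laplacian

variable {g : EuclideanSpace ℝ (Fin 2) → ℝ} {x : EuclideanSpace ℝ (Fin 2)}

theorem fderiv_apply_single_eq_gradient (i : Fin 2) :
    fderiv ℝ g x (EuclideanSpace.single i 1) = gradient g x i := by
  rw [← toDual_gradient, InnerProductSpace.toDual_apply_apply,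
    EuclideanSpace.inner_single_right]
  simp

theorem norm_gradient_sq_eq_sum :
    ‖gradient g x‖ ^ 2 = ∑ i : Fin 2, fderiv ℝ g x (EuclideanSpace.single i 1) ^ 2 := by
  simp [EuclideanSpace.real_norm_sq_eq, fderiv_apply_single_eq_gradient]

theorem fderiv_fderiv_comp {φ ψ : ℝ → ℝ} {ψ' : ℝ} (hg : ContDiffAt ℝ 2 g x)
    (hφ : ∀ᶠ y in 𝓝 x, HasDerivAt φ (ψ (g y)) (g y)) (hψ : HasDerivAt ψ ψ' (g x)) :
    fderiv ℝ (fderiv ℝ (fun y => φ (g y))) x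
      = ψ (g x) • fderiv ℝ (fderiv ℝ g) x + (ψ' • fderiv ℝ g x).smulRight (fderiv ℝ g x) := by
  have hgd : ∀ᶠ y in 𝓝 x, HasFDerivAt g (fderiv ℝ g y) y :=
    hg.eventually (by simp) |>.mono fun y hy =>
      (hy.differentiableAt (by norm_num)).hasFDerivAt
  have hD : fderiv ℝ (fun y => φ (g y)) =ᶠ[𝓝 x] fun y => ψ (g y) • fderiv ℝ g y :=
    (hφ.and hgd).mono fun y ⟨hφy, hgy⟩ => (hφy.comp_hasFDerivAt y hgy).fderiv
  have hD2 : HasFDerivAt (fderiv ℝ g) (fderiv ℝ (fderiv ℝ g) x) x :=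
    ((hg.fderiv_right (m := 1) le_rfl).differentiableAt one_ne_zero).hasFDerivAt
  rw [hD.fderiv_eq]
  exact ((hψ.comp_hasFDerivAt x hgd.self_of_nhds).smul hD2).fderiv

theorem lap_comp {φ ψ : ℝ → ℝ} {ψ' : ℝ} (hg : ContDiffAt ℝ 2 g x)
    (hφ : ∀ᶠ y in 𝓝 x, HasDerivAt φ (ψ (g y)) (g y)) (hψ : HasDerivAt ψ ψ' (g x)) :
    lap (fun y => φ (g y)) x = ψ (g x) * lap g x + ψ' * ‖gradient g x‖ ^ 2 := by
  simp only [lap, iteratedFDeriv_two_apply, Matrix.cons_val_zero, Matrix.cons_val_one,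
    fderiv_fderiv_comp hg hφ hψ, norm_gradient_sq_eq_sum, add_apply,
    smul_apply, ContinuousLinearMap.smulRight_apply, smul_eq_mul,
    Finset.mul_sum, ← Finset.sum_add_distrib]
  exact Finset.sum_congr rfl fun i _ => by ring

end Laplacian

theorem deriv_sub_lap_comp {w : ℝ → EuclideanSpace ℝ (Fin 2) → ℝ} {φ ψ : ℝ → ℝ} {ψ' t : ℝ}
    {x : EuclideanSpace ℝ (Fin 2)} (hwt : DifferentiableAt ℝ (fun τ => w τ x) t)
    (hwx : ContDiffAt ℝ 2 (w t) x) (hφ : ∀ᶠ y in 𝓝 x, HasDerivAt φ (ψ (w t y)) (w t y))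
    (hψ : HasDerivAt ψ ψ' (w t x)) :
    deriv (fun τ => φ (w τ x)) t - lap (fun y => φ (w t y)) x
      = ψ (w t x) * (deriv (fun τ => w τ x) t - lap (w t) x)
        - ψ' * ‖gradient (w t) x‖ ^ 2 := by
  have hdt : HasDerivAt (fun τ => φ (w τ x)) (ψ (w t x) * deriv (fun τ => w τ x) t) t :=
    hφ.self_of_nhds.comp t hwt.hasDerivAt
  rw [hdt.deriv, lap_comp hwx hφ hψ]
  ring

theorem integral_Ioi_pos {h : ℝ → ℝ} {a : ℝ} (hint : IntegrableOn h (Ioi a))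
    (hpos : ∀ τ > a, 0 < h τ) : 0 < ∫ τ in Ioi a, h τ := by
  have hsupp : Ioi a ⊆ Function.support h := fun τ hτ => Function.mem_support.2 (hpos τ hτ).ne'
  rw [setIntegral_pos_iff_support_of_nonneg_ae
    ((ae_restrict_mem measurableSet_Ioi).mono fun τ hτ => (hpos τ hτ).le) hint,
    inter_eq_right.2 hsupp, Real.volume_Ioi]
  exact ENNReal.zero_lt_top

theorem hasDerivAt_integral_Ioi {h : ℝ → ℝ} {a s : ℝ} (hint : IntegrableOn h (Ioi a))
    (has : a < s) (hc : ContinuousAt h s) :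
    HasDerivAt (fun y => ∫ τ in Ioi y, h τ) (-h s) s := by
  have hIcc : HasDerivAt (fun y => ∫ τ in a..y, h τ) (h s) s :=
    intervalIntegral.integral_hasDerivAt_right
      (intervalIntegrable_iff_integrableOn_Ioc_of_le has.le |>.2 <|
        hint.mono_set Ioc_subset_Ioi_self)
      (AEStronglyMeasurable.stronglyMeasurableAtFilter_of_mem hint.aestronglyMeasurable
        (Ioi_mem_nhds has)) hc
  have hsplit : (fun y => ∫ τ in Ioi y, h τ)
      =ᶠ[𝓝 s] fun y => (∫ τ in Ioi a, h τ) - ∫ τ in a..y, h τ := by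
    filter_upwards [Ioi_mem_nhds has] with y hy
    rw [← intervalIntegral.integral_Ioi_sub_Ioi hint hy.le, sub_sub_cancel]
  exact (((hasDerivAt_const s _).sub hIcc).congr_of_eventuallyEq hsplit).congr_deriv
    (zero_sub _)

theorem hasDerivAt_integral_Ioi_one_div {f F : ℝ → ℝ} (hfc : ∀ r > (0:ℝ), ContinuousAt f r)
    (hfpos : ∀ r > (0:ℝ), 0 < f r) (hint : ∀ r > (0:ℝ), IntegrableOn (fun τ => 1 / f τ) (Ioi r))
    (hF : ∀ r > (0:ℝ), F r = ∫ τ in Ioi r, 1 / f τ) {s : ℝ} (hs : 0 < s) :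
    HasDerivAt F (-(1 / f s)) s := by
  have hs2 : 0 < s / 2 := half_pos hs
  refine (hasDerivAt_integral_Ioi (hint _ hs2) (half_lt_self hs)
    (continuousAt_const.div (hfc s hs) (hfpos s hs).ne')).congr_of_eventuallyEq ?_
  filter_upwards [Ioi_mem_nhds hs] with r hr using hF r hr

theorem hasDerivAt_leftInverse_of_hasDerivAt_neg_one_div {f F G : ℝ → ℝ} {u : ℝ}
    (hu : 0 < G u) (hFG : F (G u) = u) (hfc : ∀ r > (0:ℝ), ContinuousAt f r)
    (hfpos : ∀ r > (0:ℝ), 0 < f r) (hF : ∀ r > (0:ℝ), HasDerivAt F (-(1 / f r)) r)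
    (hG : ∀ r > (0:ℝ), G (F r) = r) :
    HasDerivAt G (-f (G u)) u := by
  have hstrict : HasStrictDerivAt F (-(1 / f (G u))) (G u) :=
    hasStrictDerivAt_of_hasDerivAt_of_continuousAt
      (Filter.mem_of_superset (Ioi_mem_nhds hu) fun r hr => hF r hr)
      (continuousAt_const.div (hfc _ hu) (hfpos _ hu).ne').neg
  have hne : -(1 / f (G u)) ≠ 0 := neg_ne_zero.2 (one_div_pos.2 (hfpos _ hu)).ne'
  have hleft : ∀ᶠ r in 𝓝 (G u), G (F r) = r :=
    Filter.mem_of_superset (Ioi_mem_nhds hu) fun r hr => hG r hr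
  have h := (hstrict.to_local_left_inverse hne hleft).hasDerivAt
  rw [hFG] at h
  exact h.congr_deriv (by rw [one_div, inv_neg, inv_inv])

theorem rpow_neg_two_le_of_rpow_neg_half_le {a y : ℝ} (ha : 0 < a)
    (h : a ^ (-(1/2):ℝ) ≤ y) : y ^ (-(2:ℝ)) ≤ a := by
  calc y ^ (-(2:ℝ)) ≤ (a ^ (-(1/2):ℝ)) ^ (-(2:ℝ)) :=
        Real.rpow_le_rpow_of_nonpos (Real.rpow_pos_of_pos ha _) h (by norm_num)
    _ = a := by rw [← Real.rpow_mul ha.le]; norm_num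

theorem hasDerivAt_rpow_neg_two {y : ℝ} (hy : 0 < y) :
    HasDerivAt (fun z : ℝ => z ^ (-(2:ℝ))) (-2 / y ^ 3) y := by
  convert Real.hasDerivAt_rpow_const (p := -2) (Or.inl hy.ne') using 1
  rw [show (-2 : ℝ) - 1 = -(3:ℕ) by norm_num, Real.rpow_neg hy.le, Real.rpow_natCast]
  ring

theorem hasDerivAt_comp_rpow_neg_two {Φ g : ℝ → ℝ} {y : ℝ} (hy : 0 < y)
    (hΦ : HasDerivAt Φ (-g (Φ (y ^ (-(2:ℝ))))) (y ^ (-(2:ℝ)))) :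
    HasDerivAt (fun z => Φ (z ^ (-(2:ℝ)))) (2 * g (Φ (y ^ (-(2:ℝ)))) / y ^ 3) y :=
  (hΦ.comp y (hasDerivAt_rpow_neg_two hy)).congr_deriv (by ring)

theorem hasDerivAt_comp_rpow_neg_two_div_pow_three {Φ g : ℝ → ℝ} {g' y : ℝ} (hy : 0 < y)
    (hΦ : HasDerivAt Φ (-g (Φ (y ^ (-(2:ℝ))))) (y ^ (-(2:ℝ))))
    (hg : HasDerivAt g g' (Φ (y ^ (-(2:ℝ))))) :
    HasDerivAt (fun z => 2 * g (Φ (z ^ (-(2:ℝ)))) / z ^ 3)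
      (4 * g' * g (Φ (y ^ (-(2:ℝ)))) / y ^ 6 - 6 * g (Φ (y ^ (-(2:ℝ)))) / y ^ 4) y := by
  have h := ((hg.comp y (hasDerivAt_comp_rpow_neg_two hy hΦ)).const_mul 2).div
    (hasDerivAt_pow 3 y) (pow_ne_zero 3 hy.ne')
  refine h.congr_deriv ?_
  simp only [Function.comp_apply]
  field_simp
  ring

theorem stmt17_general
    (f : ℝ → ℝ) (hf : ContDiffOn ℝ 1 f (Ici 0))
    (hfpos : ∀ s > (0:ℝ), 0 < f s)
    (hint : ∀ s > (0:ℝ), IntegrableOn (fun τ => 1 / f τ) (Ioi s))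
    (F : ℝ → ℝ) (hF : ∀ s > (0:ℝ), F s = ∫ τ in Ioi s, 1 / f τ)
    (β : ℝ) (hβ : 0 < β) (hfF : ∀ s ≥ β, deriv f s * F s ≤ 1)
    (Finv : ℝ → ℝ)
    (hFinv_left : ∀ s > (0:ℝ), Finv (F s) = s)
    (hFinv_right : ∀ u : ℝ, 0 < u → u ≤ F β → β ≤ Finv u ∧ F (Finv u) = u)
    (T R : ℝ)
    (w : ℝ → EuclideanSpace ℝ (Fin 2) → ℝ)
    (hwreg : ∀ t ∈ Ioo 0 T, ContDiffOn ℝ 2 (w t) (ball (0 : EuclideanSpace ℝ (Fin 2)) R))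
    (hwt : ∀ x ∈ ball (0 : EuclideanSpace ℝ (Fin 2)) R,
      ∀ t ∈ Ioo 0 T, DifferentiableAt ℝ (fun τ => w τ x) t)
    (hwlb : ∀ t ∈ Ioo 0 T, ∀ x ∈ ball (0 : EuclideanSpace ℝ (Fin 2)) R,
      (F β) ^ (-(1/2) : ℝ) ≤ w t x)
    (hheat : ∀ t ∈ Ioo 0 T, ∀ x ∈ ball (0 : EuclideanSpace ℝ (Fin 2)) R,
      deriv (fun τ => w τ x) t - lap (w t) x = (w t x) ^ 3 / 2) :
    ∀ t ∈ Ioo 0 T, ∀ x ∈ ball (0 : EuclideanSpace ℝ (Fin 2)) R,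
      deriv (fun τ => Finv ((w τ x) ^ (-(2:ℝ)))) t
          - lap (fun y => Finv ((w t y) ^ (-(2:ℝ)))) x
          - f (Finv ((w t x) ^ (-(2:ℝ))))
        = 4 * f (Finv ((w t x) ^ (-(2:ℝ)))) * (w t x) ^ (-(4:ℝ))
            * ‖gradient (w t) x‖ ^ 2
            * (3/2 - deriv f (Finv ((w t x) ^ (-(2:ℝ))))
                * F (Finv ((w t x) ^ (-(2:ℝ)))))
      ∧ 0 ≤ 4 * f (Finv ((w t x) ^ (-(2:ℝ)))) * (w t x) ^ (-(4:ℝ))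
            * ‖gradient (w t) x‖ ^ 2
            * (3/2 - deriv f (Finv ((w t x) ^ (-(2:ℝ))))
                * F (Finv ((w t x) ^ (-(2:ℝ))))) := by
  intro t ht x hx
  have hfc : ∀ s > (0:ℝ), ContinuousAt f s := fun s hs =>
    hf.continuousOn.continuousAt (Ici_mem_nhds hs)
  have hFβ : 0 < F β := hF β hβ ▸
    integral_Ioi_pos (hint β hβ) fun τ hτ => one_div_pos.2 (hfpos τ (hβ.trans hτ))
  have hFd : ∀ s > (0:ℝ), HasDerivAt F (-(1 / f s)) s := fun s hs =>
    hasDerivAt_integral_Ioi_one_div hfc hfpos hint hF hs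
  have hrange : ∀ y, F β ^ (-(1/2):ℝ) ≤ y → 0 < y ∧ β ≤ Finv (y ^ (-(2:ℝ)))
      ∧ F (Finv (y ^ (-(2:ℝ)))) = y ^ (-(2:ℝ))
      ∧ HasDerivAt Finv (-f (Finv (y ^ (-(2:ℝ))))) (y ^ (-(2:ℝ))) := by
    intro y hy
    have hy0 : 0 < y := (Real.rpow_pos_of_pos hFβ _).trans_le hy
    obtain ⟨hβle, hFy⟩ :=
      hFinv_right _ (by positivity) (rpow_neg_two_le_of_rpow_neg_half_le hFβ hy)
    exact ⟨hy0, hβle, hFy, hasDerivAt_leftInverse_of_hasDerivAt_neg_one_div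
      (hβ.trans_le hβle) hFy hfc hfpos hFd hFinv_left⟩
  obtain ⟨hw0, hβle, hFū, hΦ⟩ := hrange _ (hwlb t ht x hx)
  have hū0 : 0 < Finv (w t x ^ (-(2:ℝ))) := hβ.trans_le hβle
  have hdiff : HasDerivAt f (deriv f _) (Finv (w t x ^ (-(2:ℝ)))) :=
    ((hf.contDiffAt (Ici_mem_nhds hū0)).differentiableAt one_ne_zero).hasDerivAt
  have hΦ_near : ∀ᶠ y in 𝓝 x, HasDerivAt (fun z => Finv (z ^ (-(2:ℝ))))
      (2 * f (Finv (w t y ^ (-(2:ℝ)))) / w t y ^ 3) (w t y) := by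
    filter_upwards [isOpen_ball.mem_nhds hx] with y hy
    obtain ⟨hy0, -, -, hΦy⟩ := hrange _ (hwlb t ht y hy)
    exact hasDerivAt_comp_rpow_neg_two hy0 hΦy
  have hchain := deriv_sub_lap_comp (hwt x hx t ht)
    ((hwreg t ht).contDiffAt (isOpen_ball.mem_nhds hx)) hΦ_near
    (hasDerivAt_comp_rpow_neg_two_div_pow_three hw0 hΦ hdiff)
  refine ⟨?_, ?_⟩
  · rw [hchain, hheat t ht x hx, hFū]
    simp only [Real.rpow_neg_ofNat, zpow_neg, zpow_ofNat]
    field_simp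
    ring
  · have hfū : 0 ≤ 4 * f (Finv (w t x ^ (-(2:ℝ)))) := by linarith [hfpos _ hū0]
    exact mul_nonneg (mul_nonneg (mul_nonneg hfū (Real.rpow_pos_of_pos hw0 _).le)
      (sq_nonneg _)) (by linarith [hfF _ hβle])

/-- generalized Cole–Hopf: if `w > 0` is a `C^{1,2}` solution of
`∂ₜ w - Δ w = w³/2` on `(0,T) × B_R` with `w ≥ F(β)^{-1/2}`, where `f'(s)F(s) ≤ 1`
for `s ≥ β`, then `ū = F⁻¹(w⁻²)` satisfies
`∂ₜ ū - Δ ū - f(ū) = 4 f(ū) w⁻⁴ |∇w|² (3/2 - f'(ū) F(ū)) ≥ 0`;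
in particular `ū` is a classical supersolution of `∂ₜ u = Δ u + f(u)`. -/
theorem stmt17
    (f : ℝ → ℝ) (hf : ContDiffOn ℝ 1 f (Ici 0))
    (hfpos : ∀ s > (0:ℝ), 0 < f s) (hf'pos : ∀ s > (0:ℝ), 0 < deriv f s)
    (hint : ∀ s > (0:ℝ), IntegrableOn (fun τ => 1 / f τ) (Ioi s))
    (F : ℝ → ℝ) (hF : ∀ s > (0:ℝ), F s = ∫ τ in Ioi s, 1 / f τ)
    (β : ℝ) (hβ : 0 < β) (hfF : ∀ s ≥ β, deriv f s * F s ≤ 1)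
    (Finv : ℝ → ℝ)
    (hFinv_left : ∀ s > (0:ℝ), Finv (F s) = s)
    (hFinv_right : ∀ u : ℝ, 0 < u → u ≤ F β → β ≤ Finv u ∧ F (Finv u) = u)
    (T R : ℝ) (hT : 0 < T) (hR : 0 < R)
    (w : ℝ → EuclideanSpace ℝ (Fin 2) → ℝ)
    (hwreg : ∀ t ∈ Ioo 0 T, ContDiffOn ℝ 2 (w t) (ball (0 : EuclideanSpace ℝ (Fin 2)) R))
    (hwt : ∀ x ∈ ball (0 : EuclideanSpace ℝ (Fin 2)) R,
      ∀ t ∈ Ioo 0 T, DifferentiableAt ℝ (fun τ => w τ x) t)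
    (hwlb : ∀ t ∈ Ioo 0 T, ∀ x ∈ ball (0 : EuclideanSpace ℝ (Fin 2)) R,
      (F β) ^ (-(1/2) : ℝ) ≤ w t x)
    (hwpos : ∀ t ∈ Ioo 0 T, ∀ x ∈ ball (0 : EuclideanSpace ℝ (Fin 2)) R, 0 < w t x)
    (hheat : ∀ t ∈ Ioo 0 T, ∀ x ∈ ball (0 : EuclideanSpace ℝ (Fin 2)) R,
      deriv (fun τ => w τ x) t - lap (w t) x = (w t x) ^ 3 / 2) :
    ∀ t ∈ Ioo 0 T, ∀ x ∈ ball (0 : EuclideanSpace ℝ (Fin 2)) R,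
      deriv (fun τ => Finv ((w τ x) ^ (-(2:ℝ)))) t
          - lap (fun y => Finv ((w t y) ^ (-(2:ℝ)))) x
          - f (Finv ((w t x) ^ (-(2:ℝ))))
        = 4 * f (Finv ((w t x) ^ (-(2:ℝ)))) * (w t x) ^ (-(4:ℝ))
            * ‖gradient (w t) x‖ ^ 2
            * (3/2 - deriv f (Finv ((w t x) ^ (-(2:ℝ))))
                * F (Finv ((w t x) ^ (-(2:ℝ)))))
      ∧ 0 ≤ 4 * f (Finv ((w t x) ^ (-(2:ℝ)))) * (w t x) ^ (-(4:ℝ))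
            * ‖gradient (w t) x‖ ^ 2
            * (3/2 - deriv f (Finv ((w t x) ^ (-(2:ℝ))))
                * F (Finv ((w t x) ^ (-(2:ℝ))))) :=
  stmt17_general f hf hfpos hint F hF β hβ hfF Finv hFinv_left hFinv_right T R w hwreg hwt hwlb
    hheat
end
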